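/- Fix U ∈ ℝ. There exist r₀ ≥ 2 and C > 0 such that: for every r ≥ r₀, the complex number s(r·e^{iπ/4}) = 1 + 1/(r·e^{iπ/4}) − U²/(r·e^{iπ/4})³ does not lie in (−∞, 0], and, defining ω_−(k) = (U − k²·√(s(k)))/(1 + 1/k) with the principal branch of the complex square root, for every t ∈ (0, 1] one has ∫_{r₀}^∞ |exp(−i·ω_−(r·e^{iπ/4})·t)|·(1/r) dr ≤ C·(1 + |log t|). -/

import Mathlib

/-!
On the ray `k = r e^{iπ/4}` one has `k² = i r²`, and once `r ≥ 8(1 + U²)` the radicand `s(k)`,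
its principal square root and `1 + 1/k` all lie within `1/8` of `1`. Writing
`ω₋ = U/(1 + 1/k) − i r² · √s/(1 + 1/k)` then gives `Im ω₋ ≤ 2|U| − r²/2`, hence
`|e^{−iω₋t}| ≤ e^{2|U|} e^{−tr}` for `t ≤ 1`. Finally `∫_a^∞ e^{−tr}/r dr` is at most `log (1/t)`
up to `r = 1/t`, where `e^{−tr} ≤ 1`, and at most `∫ t e^{−tr} ≤ 1` beyond it.
-/

open MeasureTheory

/-- The point `k = r·e^{iπ/4}` on the ray of argument `π/4`. -/
noncomputable def rayPt (r : ℝ) : ℂ := (r : ℂ) * Complex.exp (Complex.I * (Real.pi / 4))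

/-- The radicand `s(k) = 1 + 1/k − U²/k³`. -/
noncomputable def plateRad (U : ℝ) (k : ℂ) : ℂ := 1 + 1 / k - (U : ℂ) ^ 2 / k ^ 3

/-- The dispersion root `ω₋(k) = (U − k²√(s(k)))/(1+1/k)` (principal branch). -/
noncomputable def plateOmegaMC (U : ℝ) (k : ℂ) : ℂ :=
  ((U : ℂ) - k ^ 2 * plateRad U k ^ ((1 : ℂ) / 2)) / (1 + 1 / k)

open Real Set

lemma integrableOn_exp_neg_mul_div_Ioi {a t : ℝ} (ha : 0 < a) (ht : 0 < t) :
    IntegrableOn (fun r => exp (-t * r) / r) (Ioi a) := by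
  refine ((integrableOn_exp_mul_Ioi (neg_lt_zero.2 ht) a).div_const a).mono'
    (by fun_prop : Measurable fun r => exp (-t * r) / r).aestronglyMeasurable ?_
  refine ae_restrict_of_forall_mem measurableSet_Ioi fun r hr => ?_
  have hr : a < r := hr
  have hr0 : 0 < r := ha.trans hr
  rw [norm_of_nonneg (by positivity)]
  gcongr

lemma setIntegral_Ioc_exp_neg_mul_div_le {a b t : ℝ} (ha : 0 < a) (hab : a ≤ b) (ht : 0 ≤ t) :
    ∫ r in Ioc a b, exp (-t * r) / r ≤ log b - log a := by
  have hint {f : ℝ → ℝ} (hf : Continuous f) : IntegrableOn (fun r => f r / r) (Ioc a b) :=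
    (hf.continuousOn.div continuousOn_id fun r hr => (ha.trans_le hr.1).ne').integrableOn_Icc
      |>.mono_set Ioc_subset_Icc_self
  calc ∫ r in Ioc a b, exp (-t * r) / r ≤ ∫ r in Ioc a b, 1 / r := by
        refine setIntegral_mono_on (hint (by fun_prop)) (hint continuous_const) measurableSet_Ioc
          fun r hr => ?_
        · have := ha.trans hr.1
          gcongr
          exact exp_le_one_iff.2 (by nlinarith)
    _ = log b - log a := by
        rw [← intervalIntegral.integral_of_le hab, integral_one_div_of_pos ha (ha.trans_le hab),
          log_div (ha.trans_le hab).ne' ha.ne']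

lemma setIntegral_Ioi_exp_neg_mul_div_le_one {M t : ℝ} (ht : 0 < t) (hM : 1 ≤ t * M) :
    ∫ r in Ioi M, exp (-t * r) / r ≤ 1 := by
  have hM0 : 0 < M := pos_of_mul_pos_right (one_pos.trans_le hM) ht.le
  calc ∫ r in Ioi M, exp (-t * r) / r ≤ ∫ r in Ioi M, t * exp (-t * r) := by
        refine setIntegral_mono_on (integrableOn_exp_neg_mul_div_Ioi hM0 ht)
          ((integrableOn_exp_mul_Ioi (neg_lt_zero.2 ht) M).const_mul t) measurableSet_Ioi
          fun r hr => ?_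
        have hr : M < r := hr
        rw [div_eq_mul_inv, mul_comm]
        gcongr
        rw [inv_le_iff_one_le_mul₀ (hM0.trans hr)]
        nlinarith
    _ = exp (-t * M) := by
        rw [integral_const_mul, integral_exp_mul_Ioi (neg_lt_zero.2 ht)]
        field_simp
    _ ≤ 1 := exp_le_one_iff.2 (by nlinarith)

lemma setIntegral_Ioi_exp_neg_mul_div_le {a t : ℝ} (ha : 1 ≤ a) (ht : 0 < t) :
    ∫ r in Ioi a, exp (-t * r) / r ≤ 1 + |log t| := by
  rcases le_or_gt 1 (t * a) with hta | hta
  · exact (setIntegral_Ioi_exp_neg_mul_div_le_one ht hta).trans (by simp)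
  · have ha0 : 0 < a := one_pos.trans_le ha
    have haM : a ≤ t⁻¹ := by rw [← one_div, le_div_iff₀ ht]; linarith
    have hint := integrableOn_exp_neg_mul_div_Ioi ha0 ht
    rw [← Ioc_union_Ioi_eq_Ioi haM, setIntegral_union (Ioc_disjoint_Ioi le_rfl) measurableSet_Ioi
      (hint.mono_set Ioc_subset_Ioi_self) (hint.mono_set (Ioi_subset_Ioi haM))]
    have h1 := setIntegral_Ioc_exp_neg_mul_div_le ha0 haM ht.le
    have h2 := setIntegral_Ioi_exp_neg_mul_div_le_one ht (mul_inv_cancel₀ ht.ne').ge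
    rw [log_inv] at h1
    have := log_nonneg ha
    have := neg_le_abs (log t)
    linarith

lemma Complex.one_sub_norm_sub_one_le_re (z : ℂ) : 1 - ‖z - 1‖ ≤ z.re := by
  have := neg_abs_le (z - 1).re
  have := Complex.abs_re_le_norm (z - 1)
  simp only [Complex.sub_re, Complex.one_re] at *
  linarith

lemma Complex.norm_cpow_half_sub_one_le (s : ℂ) :
    ‖s ^ ((1 : ℂ) / 2) - 1‖ ≤ ‖s - 1‖ := by
  set q := s ^ ((1 : ℂ) / 2)
  have hq_sq : q ^ 2 = s := by simp [q, one_div]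
  have hq_re : 0 ≤ q.re := by simp only [q, one_div, Complex.cpow_inv_two_re]; positivity
  have hq_add : 1 ≤ ‖q + 1‖ := by
    calc (1 : ℝ) ≤ (q + 1).re := by simpa using hq_re
      _ ≤ ‖q + 1‖ := Complex.re_le_norm _
  calc ‖q - 1‖ ≤ ‖q - 1‖ * ‖q + 1‖ := le_mul_of_one_le_right (norm_nonneg _) hq_add
    _ = ‖s - 1‖ := by rw [← norm_mul, ← hq_sq]; ring_nf

lemma norm_rayPt {r : ℝ} (hr : 0 ≤ r) : ‖rayPt r‖ = r := by
  simp [rayPt, Complex.norm_exp, abs_of_nonneg hr]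

lemma rayPt_sq (r : ℝ) : rayPt r ^ 2 = ((r ^ 2 : ℝ) : ℂ) * Complex.I := by
  rw [rayPt, mul_pow, ← Complex.exp_nat_mul,
    show ((2 : ℕ) : ℂ) * (Complex.I * (π / 4)) = (π / 2) * Complex.I by push_cast; ring,
    Complex.exp_mul_I]
  simp

lemma norm_plateRad_sub_one_le (U : ℝ) {k : ℂ} (hk : 1 ≤ ‖k‖) :
    ‖plateRad U k - 1‖ ≤ (1 + U ^ 2) / ‖k‖ := by
  have hk0 : 0 < ‖k‖ := one_pos.trans_le hk
  calc ‖plateRad U k - 1‖ = ‖1 / k - (U : ℂ) ^ 2 / k ^ 3‖ := by rw [plateRad]; ring_nf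
    _ ≤ 1 / ‖k‖ + U ^ 2 / ‖k‖ ^ 3 := (norm_sub_le _ _).trans_eq (by simp)
    _ ≤ 1 / ‖k‖ + U ^ 2 / ‖k‖ := by gcongr; exact le_self_pow₀ hk (by norm_num)
    _ = (1 + U ^ 2) / ‖k‖ := by ring

lemma norm_plateRad_sub_one_le_one_div_eight (U : ℝ) {k : ℂ}
    (hk : 8 * (1 + U ^ 2) ≤ ‖k‖) :
    ‖plateRad U k - 1‖ ≤ 1 / 8 := by
  have hU : 1 ≤ 1 + U ^ 2 := le_add_of_nonneg_right (sq_nonneg U)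
  refine (norm_plateRad_sub_one_le U (by linarith)).trans ?_
  rw [div_le_iff₀ (by linarith)]
  linarith

lemma re_plateRad_ge (U : ℝ) {k : ℂ} (hk : 8 * (1 + U ^ 2) ≤ ‖k‖) :
    7 / 8 ≤ (plateRad U k).re := by
  linarith [Complex.one_sub_norm_sub_one_le_re (plateRad U k),
    norm_plateRad_sub_one_le_one_div_eight U hk]

lemma im_plateOmegaMC_rayPt_le (U : ℝ) {r : ℝ} (hr : 8 * (1 + U ^ 2) ≤ r) :
    (plateOmegaMC U (rayPt r)).im ≤ 2 * |U| - r ^ 2 / 2 := by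
  have hr8 : 8 ≤ r := by nlinarith [sq_nonneg U]
  set k := rayPt r
  have hk : ‖k‖ = r := norm_rayPt (by linarith)
  set q := plateRad U k ^ ((1 : ℂ) / 2)
  set d := 1 + 1 / k
  have hq : ‖q - 1‖ ≤ 1 / 8 := (Complex.norm_cpow_half_sub_one_le _).trans
    (norm_plateRad_sub_one_le_one_div_eight U (hk ▸ hr))
  have hd : ‖d - 1‖ ≤ 1 / 8 := by
    simp only [d, add_sub_cancel_left, norm_div, norm_one, hk]
    rw [div_le_iff₀ (by linarith)]
    linarith
  have hd_norm : 7 / 8 ≤ ‖d‖ := by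
    have := norm_sub_norm_le (1 : ℂ) (1 - d)
    rw [sub_sub_cancel, norm_one, norm_sub_rev] at this
    linarith
  have hω : plateOmegaMC U k = U / d - Complex.I * (((r ^ 2 : ℝ) : ℂ) * (q / d)) := by
    rw [plateOmegaMC, rayPt_sq]
    ring
  have hU : (U / d).im ≤ 2 * |U| := by
    refine (Complex.im_le_norm _).trans ?_
    rw [norm_div, Complex.norm_real, div_le_iff₀ (by linarith), Real.norm_eq_abs]
    nlinarith [abs_nonneg U]
  have hw : 1 / 2 ≤ (q / d).re := by
    have : ‖q / d - 1‖ ≤ 2 / 7 := by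
      rw [div_sub_one (by rintro h; simp [h] at hd_norm; linarith), norm_div,
        div_le_iff₀ (by linarith)]
      calc ‖q - d‖ = ‖(q - 1) - (d - 1)‖ := by ring_nf
        _ ≤ ‖q - 1‖ + ‖d - 1‖ := norm_sub_le _ _
        _ ≤ 2 / 7 * ‖d‖ := by linarith
    linarith [Complex.one_sub_norm_sub_one_le_re (q / d)]
  rw [hω, Complex.sub_im, Complex.I_mul_im, Complex.re_ofReal_mul]
  nlinarith

lemma norm_exp_plateOmegaMC_rayPt_le (U : ℝ) {r t : ℝ} (hr : 8 * (1 + U ^ 2) ≤ r)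
    (ht : 0 ≤ t) (ht1 : t ≤ 1) :
    ‖Complex.exp (-Complex.I * plateOmegaMC U (rayPt r) * t)‖ ≤
      exp (2 * |U|) * exp (-t * r) := by
  have hr8 : 8 ≤ r := by nlinarith [sq_nonneg U]
  have hre : (-Complex.I * plateOmegaMC U (rayPt r) * t).re =
      (plateOmegaMC U (rayPt r)).im * t := by
    simp [Complex.mul_re]
  have hdecay : (2 * |U| - r ^ 2 / 2) * t ≤ 2 * |U| + -t * r := by
    nlinarith [mul_nonneg (sub_nonneg.2 ht1) (abs_nonneg U),
      mul_nonneg ht (mul_nonneg (by linarith : (0 : ℝ) ≤ r)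
        (by linarith : (0 : ℝ) ≤ r - 2))]
  rw [Complex.norm_exp, ← Real.exp_add, hre]
  gcongr
  exact (mul_le_mul_of_nonneg_right (im_plateOmegaMC_rayPt_le U hr) ht).trans hdecay

lemma measurable_plateOmegaMC_rayPt (U : ℝ) :
    Measurable fun r => plateOmegaMC U (rayPt r) := by
  unfold plateOmegaMC plateRad rayPt
  fun_prop

/-- logarithmic estimate along the ray `arg k = π/4` with weight `1/r`:
there are `r₀ ≥ 2`, `C > 0` such that the radicand avoids `(−∞,0]` on the ray beyond
`r₀` and for all `t ∈ (0,1]`,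
`∫_{r₀}^∞ |e^{−iω₋(re^{iπ/4})t}|·(1/r) dr ≤ C·(1 + |log t|)`. -/
theorem forcing_log_estimate (U : ℝ) :
    ∃ r₀ : ℝ, 2 ≤ r₀ ∧ ∃ C : ℝ, 0 < C ∧
      (∀ r : ℝ, r₀ ≤ r →
        ¬ ((plateRad U (rayPt r)).im = 0 ∧ (plateRad U (rayPt r)).re ≤ 0))
      ∧ ∀ t : ℝ, 0 < t → t ≤ 1 →
        IntegrableOn
          (fun r => ‖Complex.exp (-Complex.I * plateOmegaMC U (rayPt r) * (t : ℂ))‖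
            * (1 / r))
          (Set.Ioi r₀)
        ∧ ∫ r in Set.Ioi r₀,
            ‖Complex.exp (-Complex.I * plateOmegaMC U (rayPt r) * (t : ℂ))‖ * (1 / r)
          ≤ C * (1 + |Real.log t|) := by
  set r₀ := 8 * (1 + U ^ 2)
  have hr₀ : 8 ≤ r₀ := by nlinarith [sq_nonneg U]
  refine ⟨r₀, by linarith, exp (2 * |U|), exp_pos _, fun r hr ⟨_, hre⟩ => ?_,
    fun t ht ht1 => ?_⟩
  · linarith [re_plateRad_ge U (k := rayPt r) (by rwa [norm_rayPt (by linarith)])]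
  have hdom : ∀ r ∈ Ioi r₀,
      ‖Complex.exp (-Complex.I * plateOmegaMC U (rayPt r) * t)‖ * (1 / r) ≤
        exp (2 * |U|) * (exp (-t * r) / r) := fun r hr => by
    have hr : r₀ < r := hr
    rw [mul_one_div, ← mul_div_assoc]
    gcongr
    · linarith
    exact norm_exp_plateOmegaMC_rayPt_le U hr.le ht.le ht1
  have hg := (integrableOn_exp_neg_mul_div_Ioi (a := r₀) (by linarith) ht).const_mul
    (exp (2 * |U|))
  have hf : IntegrableOn (fun r => ‖Complex.exp (-Complex.I * plateOmegaMC U (rayPt r) * t)‖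
      * (1 / r)) (Ioi r₀) := by
    have := measurable_plateOmegaMC_rayPt U
    refine hg.mono' (by fun_prop : Measurable _).aestronglyMeasurable
      (ae_restrict_of_forall_mem measurableSet_Ioi fun r hr => ?_)
    have hr0 : 0 < r := by linarith [show r₀ < r from hr]
    exact (norm_of_nonneg (by positivity)).trans_le (hdom r hr)
  refine ⟨hf, ?_⟩
  calc _ ≤ ∫ r in Ioi r₀, exp (2 * |U|) * (exp (-t * r) / r) :=
        setIntegral_mono_on hf hg measurableSet_Ioi hdom
    _ = exp (2 * |U|) * ∫ r in Ioi r₀, exp (-t * r) / r := integral_const_mul _ _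
    _ ≤ exp (2 * |U|) * (1 + |log t|) := by
        gcongr
        exact setIntegral_Ioi_exp_neg_mul_div_le (by linarith) ht
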